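/- The expectation of Y equals (1/3)·(p₁ + p₂ + p₃), and the variance of Y equals (a²/27)·Σ_{k=1}^{3} ( (x - p_k)² + p_k²/3 ). -/

import Mathlib

/-!
Write `Y = (1/3) Σₖ pₖ + (1/3) Σₖ Zₖ` with `Zₖ = Aₖ · |Cₖ pₖ - x|`. Each `Zₖ` is a function of
`(Aₖ, Cₖ)`, so the `Zₖ` are pairwise independent. Since `Aₖ` is centred and independent of
`Cₖ`, `E Zₖ = 0` and `Var Zₖ = E Aₖ² · E (Cₖ pₖ - x)² = (a²/3) ((x - pₖ)² + pₖ²/3)`, the second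
factor being the variance `pₖ²/3` of `Cₖ pₖ` plus its squared bias `(pₖ - x)²`. The variance
of `Y` is then `1/9` of the sum of the `Var Zₖ`.
-/

open MeasureTheory ProbabilityTheory
open scoped ENNReal

/-- The uniform distribution on the interval `[s, t]`: Lebesgue measure restricted to
`[s, t]`, scaled by `(t - s)⁻¹`. -/
noncomputable def uniformMeasure (s t : ℝ) : Measure ℝ :=
  (ENNReal.ofReal (t - s))⁻¹ • volume.restrict (Set.Icc s t)

section UniformMeasure

variable {s t : ℝ}

lemma integral_uniformMeasure (hst : s < t) (g : ℝ → ℝ) :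
    ∫ y, g y ∂uniformMeasure s t = (t - s)⁻¹ * ∫ y in s..t, g y := by
  rw [uniformMeasure, integral_smul_measure, ENNReal.toReal_inv,
    ENNReal.toReal_ofReal (sub_nonneg.2 hst.le), intervalIntegral.integral_of_le hst.le,
    ← integral_Icc_eq_integral_Ioc, smul_eq_mul]

lemma isProbabilityMeasure_uniformMeasure (hst : s < t) :
    IsProbabilityMeasure (uniformMeasure s t) :=
  ⟨by simp [uniformMeasure, ENNReal.inv_mul_cancel, hst]⟩

lemma Continuous.integrable_uniformMeasure {g : ℝ → ℝ} (hg : Continuous g) (hst : s < t) :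
    Integrable g (uniformMeasure s t) :=
  hg.integrableOn_Icc.smul_measure (by simp [hst])

variable {Ω : Type*} [MeasurableSpace Ω] {P : Measure Ω} {X : Ω → ℝ} {g : ℝ → ℝ}

lemma aemeasurable_of_map_eq_uniformMeasure (hst : s < t) (hX : P.map X = uniformMeasure s t) :
    AEMeasurable X P :=
  have := isProbabilityMeasure_uniformMeasure hst
  .of_map_ne_zero (hX ▸ IsProbabilityMeasure.ne_zero _)

lemma integrable_comp_of_map_eq_uniformMeasure (hst : s < t)
    (hX : P.map X = uniformMeasure s t) (hg : Continuous g) :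
    Integrable (fun ω ↦ g (X ω)) P :=
  (integrable_map_measure hg.aestronglyMeasurable
    (aemeasurable_of_map_eq_uniformMeasure hst hX)).1 (hX ▸ hg.integrable_uniformMeasure hst)

lemma memLp_comp_of_map_eq_uniformMeasure (hst : s < t)
    (hX : P.map X = uniformMeasure s t) (hg : Continuous g) :
    MemLp (fun ω ↦ g (X ω)) 2 P :=
  (memLp_two_iff_integrable_sq
    (hg.aestronglyMeasurable.comp_aemeasurable (aemeasurable_of_map_eq_uniformMeasure hst hX))).2
    (integrable_comp_of_map_eq_uniformMeasure hst hX (hg.pow 2))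

lemma integral_comp_of_map_eq_uniformMeasure (hst : s < t)
    (hX : P.map X = uniformMeasure s t) (hg : Continuous g) :
    ∫ ω, g (X ω) ∂P = (t - s)⁻¹ * ∫ y in s..t, g y := by
  rw [← integral_uniformMeasure hst, ← hX,
    integral_map (aemeasurable_of_map_eq_uniformMeasure hst hX) hg.aestronglyMeasurable]

lemma integral_of_map_eq_uniformMeasure (hst : s < t) (hX : P.map X = uniformMeasure s t) :
    ∫ ω, X ω ∂P = (s + t) / 2 := by
  rw [integral_comp_of_map_eq_uniformMeasure hst hX continuous_id', integral_id]
  field_simp [(sub_pos.2 hst).ne']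
  ring

lemma integral_sq_of_map_eq_uniformMeasure (hst : s < t) (hX : P.map X = uniformMeasure s t) :
    ∫ ω, X ω ^ 2 ∂P = (s ^ 2 + s * t + t ^ 2) / 3 := by
  rw [integral_comp_of_map_eq_uniformMeasure hst hX (continuous_pow 2), integral_pow]
  field_simp [(sub_pos.2 hst).ne']
  ring

lemma variance_of_map_eq_uniformMeasure [IsProbabilityMeasure P] (hst : s < t)
    (hX : P.map X = uniformMeasure s t) :
    Var[X; P] = (t - s) ^ 2 / 12 := by
  rw [variance_eq_sub (memLp_comp_of_map_eq_uniformMeasure hst hX continuous_id')]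
  simp only [Pi.pow_apply]
  rw [integral_sq_of_map_eq_uniformMeasure hst hX, integral_of_map_eq_uniformMeasure hst hX]
  ring

lemma integral_mul_sub_sq_of_map_eq_uniformMeasure [IsProbabilityMeasure P] (hst : s < t)
    (hX : P.map X = uniformMeasure s t) (c d : ℝ) :
    ∫ ω, (X ω * c - d) ^ 2 ∂P = (t - s) ^ 2 / 12 * c ^ 2 + ((s + t) / 2 * c - d) ^ 2 := by
  have hY := memLp_comp_of_map_eq_uniformMeasure hst hX (g := fun y ↦ y * c - d) (by fun_prop)
  have hX_int := integrable_comp_of_map_eq_uniformMeasure hst hX continuous_id'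
  have h := variance_eq_sub hY
  simp only [Pi.pow_apply] at h
  rw [variance_sub_const (hX_int.aestronglyMeasurable.mul_const c),
    variance_mul_const, variance_of_map_eq_uniformMeasure hst hX,
    integral_sub (hX_int.mul_const c) (integrable_const d), integral_mul_const,
    integral_of_map_eq_uniformMeasure hst hX, integral_const, probReal_univ, one_smul] at h
  linarith

end UniformMeasure

namespace ProbabilityTheory

variable {Ω : Type*} [MeasurableSpace Ω] {P : Measure Ω} {X Y : Ω → ℝ}

lemma IndepFun.integral_fun_mul_eq_zero (hXY : IndepFun X Y P) (hX : AEStronglyMeasurable X P)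
    (hY : AEStronglyMeasurable Y P) (hX0 : P[X] = 0) : ∫ ω, X ω * Y ω ∂P = 0 := by
  rw [hXY.integral_fun_mul_eq_mul_integral hX hY, hX0, zero_mul]

lemma IndepFun.memLp_two_mul (hXY : IndepFun X Y P) (hX : MemLp X 2 P) (hY : MemLp Y 2 P) :
    MemLp (X * Y) 2 P := by
  refine (memLp_two_iff_integrable_sq (hX.1.mul hY.1)).2 ?_
  simp only [Pi.mul_apply, mul_pow]
  exact (hXY.comp (measurable_id.pow_const 2) (measurable_id.pow_const 2)).integrable_mul
    hX.integrable_sq hY.integrable_sq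

lemma IndepFun.variance_fun_mul_of_integral_eq_zero (hXY : IndepFun X Y P) (hX : MemLp X 2 P)
    (hY : MemLp Y 2 P) (hX0 : P[X] = 0) :
    Var[fun ω ↦ X ω * Y ω; P] = P[X ^ 2] * P[Y ^ 2] := by
  rw [variance_of_integral_eq_zero (X := fun ω ↦ X ω * Y ω) (hX.1.mul hY.1).aemeasurable
    (hXY.integral_fun_mul_eq_zero hX.1 hY.1 hX0)]
  simp only [mul_pow]
  have hXY2 := hXY.comp (measurable_id.pow_const 2) (measurable_id.pow_const 2)
  exact hXY2.integral_fun_mul_eq_mul_integral (hX.1.pow 2) (hY.1.pow 2)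

end ProbabilityTheory

section GreyWolfTerm

variable {Ω : Type*} [MeasurableSpace Ω] {P : Measure Ω} {a p x : ℝ} {A C : Ω → ℝ}

lemma indepFun_abs_mul_sub (hAC : IndepFun A C P) : IndepFun A (fun ω ↦ |C ω * p - x|) P :=
  hAC.comp (ψ := fun y ↦ |y * p - x|) measurable_id (by fun_prop)

lemma memLp_mul_abs_mul_sub (ha : 0 < a) (hA : P.map A = uniformMeasure (-a) a)
    (hC : P.map C = uniformMeasure 0 2) (hAC : IndepFun A C P) :
    MemLp (fun ω ↦ A ω * |C ω * p - x|) 2 P :=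
  (indepFun_abs_mul_sub hAC).memLp_two_mul
    (memLp_comp_of_map_eq_uniformMeasure (by linarith) hA continuous_id')
    (memLp_comp_of_map_eq_uniformMeasure two_pos hC (g := fun y ↦ |y * p - x|) (by fun_prop))

lemma integral_mul_abs_mul_sub (ha : 0 < a) (hA : P.map A = uniformMeasure (-a) a)
    (hC : P.map C = uniformMeasure 0 2) (hAC : IndepFun A C P) :
    ∫ ω, A ω * |C ω * p - x| ∂P = 0 :=
  (indepFun_abs_mul_sub hAC).integral_fun_mul_eq_zero
    (aemeasurable_of_map_eq_uniformMeasure (by linarith) hA).aestronglyMeasurable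
    (memLp_comp_of_map_eq_uniformMeasure two_pos hC (g := fun y ↦ |y * p - x|) (by fun_prop)).1
    (by rw [integral_of_map_eq_uniformMeasure (by linarith) hA]; ring)

lemma variance_mul_abs_mul_sub [IsProbabilityMeasure P] (ha : 0 < a)
    (hA : P.map A = uniformMeasure (-a) a) (hC : P.map C = uniformMeasure 0 2)
    (hAC : IndepFun A C P) :
    Var[fun ω ↦ A ω * |C ω * p - x|; P] = a ^ 2 / 3 * ((x - p) ^ 2 + p ^ 2 / 3) := by
  have hsa : -a < a := by linarith
  rw [(indepFun_abs_mul_sub hAC).variance_fun_mul_of_integral_eq_zero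
    (memLp_comp_of_map_eq_uniformMeasure hsa hA continuous_id')
    (memLp_comp_of_map_eq_uniformMeasure two_pos hC (g := fun y ↦ |y * p - x|) (by fun_prop))
    (by rw [integral_of_map_eq_uniformMeasure hsa hA]; ring)]
  simp only [Pi.pow_apply, sq_abs]
  rw [integral_sq_of_map_eq_uniformMeasure hsa hA,
    integral_mul_sub_sq_of_map_eq_uniformMeasure two_pos hC]
  ring

end GreyWolfTerm

lemma ProbabilityTheory.iIndepFun.indepFun_comp_sumElim {Ω ι β γ : Type*}
    [MeasurableSpace Ω] [MeasurableSpace β] [MeasurableSpace γ] {P : Measure Ω} {A C : ι → Ω → β}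
    (h : iIndepFun (Sum.elim A C) P) (hm : ∀ s, AEMeasurable (Sum.elim A C s) P)
    {φ ψ : β × β → γ} (hφ : Measurable φ) (hψ : Measurable ψ) {i j : ι} (hij : i ≠ j) :
    IndepFun (fun ω ↦ φ (A i ω, C i ω)) (fun ω ↦ ψ (A j ω, C j ω)) P :=
  (h.indepFun_prodMk_prodMk₀ hm (.inl i) (.inr i) (.inl j) (.inr j) (by simpa using hij)
    Sum.inl_ne_inr Sum.inr_ne_inl (by simpa using hij)).comp hφ hψ

theorem gwo_new_solution_mean_variance_general
    {Ω : Type*} [MeasurableSpace Ω] (P : Measure Ω) [IsProbabilityMeasure P]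
    (a x : ℝ) (p : Fin 3 → ℝ) (ha : 0 < a)
    (A C : Fin 3 → Ω → ℝ)
    (hInd : iIndepFun (Sum.elim A C) P)
    (hAlaw : ∀ k, Measure.map (A k) P = uniformMeasure (-a) a)
    (hClaw : ∀ k, Measure.map (C k) P = uniformMeasure 0 2) :
    (∫ ω, (1 / 3 : ℝ) * ∑ k, (p k + A k ω * |C k ω * p k - x|) ∂P
        = (1 / 3) * ∑ k, p k) ∧
    variance (fun ω => (1 / 3 : ℝ) * ∑ k, (p k + A k ω * |C k ω * p k - x|)) P
        = a ^ 2 / 27 * ∑ k, ((x - p k) ^ 2 + (p k) ^ 2 / 3) := by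
  set Z : Fin 3 → Ω → ℝ := fun k ω ↦ A k ω * |C k ω * p k - x|
  have hAC k : IndepFun (A k) (C k) P := hInd.indepFun Sum.inl_ne_inr
  have hZ_L2 k : MemLp (Z k) 2 P := memLp_mul_abs_mul_sub ha (hAlaw k) (hClaw k) (hAC k)
  have hZ_int k : Integrable (Z k) P := (hZ_L2 k).integrable one_le_two
  have hZ_indep : Set.Pairwise (Finset.univ : Finset (Fin 3)) fun i j ↦
      IndepFun (Z i) (Z j) P := by
    have hm : ∀ s, AEMeasurable (Sum.elim A C s) P := fun
      | .inl k => aemeasurable_of_map_eq_uniformMeasure (by linarith) (hAlaw k)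
      | .inr k => aemeasurable_of_map_eq_uniformMeasure two_pos (hClaw k)
    exact fun i _ j _ hij ↦ hInd.indepFun_comp_sumElim hm
      (φ := fun q ↦ q.1 * |q.2 * p i - x|) (ψ := fun q ↦ q.1 * |q.2 * p j - x|)
      (by fun_prop) (by fun_prop) hij
  have hY : (fun ω ↦ (1 / 3 : ℝ) * ∑ k, (p k + A k ω * |C k ω * p k - x|))
      = fun ω ↦ (1 / 3 : ℝ) * (∑ k, p k + (∑ k, Z k) ω) := by
    ext ω
    simp [Z, Finset.sum_add_distrib]
  rw [hY]
  constructor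
  · simp only [Finset.sum_apply]
    rw [integral_const_mul,
      integral_add (integrable_const _) (integrable_finsetSum _ fun k _ ↦ hZ_int k),
      integral_const, integral_finsetSum _ fun k _ ↦ hZ_int k]
    simp [Z, integral_mul_abs_mul_sub ha (hAlaw _) (hClaw _) (hAC _)]
  · rw [variance_const_mul, variance_const_add (memLp_finsetSum' _ fun k _ ↦ hZ_L2 k).1,
      IndepFun.variance_sum (fun k _ ↦ hZ_L2 k) hZ_indep, Finset.mul_sum, Finset.mul_sum]
    refine Finset.sum_congr rfl fun k _ ↦ ?_
    rw [variance_mul_abs_mul_sub ha (hAlaw k) (hClaw k) (hAC k)]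
    ring

/-- Inference 2(2): for the grey wolf update
`Y = (1/3) Σₖ (pₖ + Aₖ · |Cₖ · pₖ - x|)` with `A₁, A₂, A₃, C₁, C₂, C₃` mutually
independent, `Aₖ ~ U[-a, a]`, `Cₖ ~ U[0, 2]`, the expectation of `Y` is
`(1/3) Σₖ pₖ` and the variance of `Y` is `(a²/27) Σₖ ((x - pₖ)² + pₖ²/3)`. -/
theorem gwo_new_solution_mean_variance
    {Ω : Type*} [MeasurableSpace Ω] (P : Measure Ω) [IsProbabilityMeasure P]
    (a x : ℝ) (p : Fin 3 → ℝ) (ha : 0 < a)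
    (A C : Fin 3 → Ω → ℝ) (hA : ∀ k, Measurable (A k)) (hC : ∀ k, Measurable (C k))
    (hInd : iIndepFun (Sum.elim A C) P)
    (hAlaw : ∀ k, Measure.map (A k) P = uniformMeasure (-a) a)
    (hClaw : ∀ k, Measure.map (C k) P = uniformMeasure 0 2) :
    (∫ ω, (1 / 3 : ℝ) * ∑ k, (p k + A k ω * |C k ω * p k - x|) ∂P
        = (1 / 3) * ∑ k, p k) ∧
    variance (fun ω => (1 / 3 : ℝ) * ∑ k, (p k + A k ω * |C k ω * p k - x|)) P
        = a ^ 2 / 27 * ∑ k, ((x - p k) ^ 2 + (p k) ^ 2 / 3) :=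
  gwo_new_solution_mean_variance_general P a x p ha A C hInd hAlaw hClaw
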